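/- Let 0 < s ≤ t < 1, let φ ∈ ℝ, and let ω ∈ ℂ with |ω| = 1. Set q₁ := s·e^{iφ}, q₂ := t·e^{iφ}, x₁ := s^{-3/2}·ω, x₂ := t^{-3/2}·ω. Then |θ₃•(q₂,x₂) − θ₃•(q₁,x₁)| ≤ Ψ(t) − Ψ(s). -/

import Mathlib

/-- The tail `θ₃•(q,x) = Σ_{j≥4} q^(j(j+1)/2) x^j` of the partial theta function
(indexed here by `j ↦ j+4`, `j : ℕ`). -/
noncomputable def theta3Tail (q x : ℂ) : ℂ :=
  ∑' j : ℕ, q ^ ((j + 4) * (j + 5) / 2) * x ^ (j + 4)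

/-- `Ψ(s) = Σ_{j≥4} s^(j(j-2)/2)` (indexed here by `j ↦ j+4`, `j : ℕ`). -/
noncomputable def Psi (s : ℝ) : ℝ := ∑' j : ℕ, s ^ ((((j : ℝ) + 4) * ((j : ℝ) + 2)) / 2)

private noncomputable def eExp (j : ℕ) : ℝ := (((j : ℝ) + 4) * ((j : ℝ) + 2)) / 2

private lemma castN (j : ℕ) : (((j + 4) * (j + 5) / 2 : ℕ) : ℝ) = ((j:ℝ)+4)*((j:ℝ)+5)/2 := by
  have h2 : 2 ∣ (j + 4) * (j + 5) := (Nat.even_mul_succ_self (j+4)).two_dvd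
  rw [Nat.cast_div h2 (by norm_num)]
  push_cast; ring

private lemma term_eq (u : ℝ) (hu : 0 < u) (φ : ℝ) (ω : ℂ) (j : ℕ) :
    ((u : ℂ) * Complex.exp (φ * Complex.I)) ^ ((j + 4) * (j + 5) / 2) *
      (((u ^ (-(3:ℝ)/2) : ℝ) : ℂ) * ω) ^ (j + 4) =
    ((u ^ eExp j : ℝ) : ℂ) *
      (Complex.exp (φ * Complex.I) ^ ((j + 4) * (j + 5) / 2) * ω ^ (j + 4)) := by
  have hr : u ^ ((j + 4) * (j + 5) / 2) * (u ^ (-(3:ℝ)/2)) ^ (j+4) = u ^ eExp j := by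
    rw [← Real.rpow_natCast u ((j + 4) * (j + 5) / 2), ← Real.rpow_natCast (u ^ (-(3:ℝ)/2)) (j+4),
        ← Real.rpow_mul hu.le, ← Real.rpow_add hu]
    congr 1
    rw [castN, eExp]
    push_cast; ring
  rw [mul_pow, mul_pow]
  rw [show ((u:ℂ)) ^ ((j + 4) * (j + 5) / 2) * Complex.exp (φ * Complex.I) ^ ((j + 4) * (j + 5) / 2) *
      ((((u ^ (-(3:ℝ)/2) : ℝ) : ℂ)) ^ (j+4) * ω ^ (j+4)) =
      ((u:ℂ)) ^ ((j + 4) * (j + 5) / 2) * (((u ^ (-(3:ℝ)/2) : ℝ) : ℂ)) ^ (j+4) *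
      (Complex.exp (φ * Complex.I) ^ ((j + 4) * (j + 5) / 2) * ω ^ (j+4)) by ring]
  congr 1
  rw [← Complex.ofReal_pow, ← Complex.ofReal_pow, ← Complex.ofReal_mul, hr]

private lemma exp_le (j : ℕ) : (j : ℝ) ≤ eExp j := by
  unfold eExp; nlinarith [sq_nonneg ((j:ℝ))]

private lemma summable_rpow (u : ℝ) (hu : 0 < u) (hu1 : u < 1) :
    Summable (fun j : ℕ => u ^ eExp j) := by
  apply Summable.of_nonneg_of_le (fun j => Real.rpow_nonneg hu.le _)
    (fun j => Real.rpow_le_rpow_of_exponent_ge hu hu1.le (exp_le j))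
  have : (fun j : ℕ => u ^ (j : ℝ)) = fun j : ℕ => u ^ j := by
    funext j; rw [Real.rpow_natCast]
  rw [this]
  exact summable_geometric_of_lt_one hu.le hu1

private lemma summable_term (u : ℝ) (hu : 0 < u) (hu1 : u < 1) (φ : ℝ) (ω : ℂ)
    (hω : ‖ω‖ = 1) :
    Summable (fun j : ℕ => ((u : ℂ) * Complex.exp (φ * Complex.I)) ^ ((j + 4) * (j + 5) / 2) *
      (((u ^ (-(3:ℝ)/2) : ℝ) : ℂ) * ω) ^ (j + 4)) := by
  apply Summable.of_norm
  apply Summable.of_nonneg_of_le (fun j => norm_nonneg _) _ (summable_rpow u hu hu1)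
  intro j
  rw [term_eq u hu φ ω j]
  rw [norm_mul, norm_mul, norm_pow, norm_pow, Complex.norm_real, Real.norm_eq_abs,
      Complex.norm_exp_ofReal_mul_I, hω,
      one_pow, one_pow, mul_one, mul_one, abs_of_nonneg (Real.rpow_nonneg hu.le _)]

theorem theta3Tail_difference_bound (s t : ℝ) (hs : 0 < s) (hst : s ≤ t) (ht : t < 1)
    (φ : ℝ) (ω : ℂ) (hω : ‖ω‖ = 1) :
    ‖(theta3Tail ((t : ℂ) * Complex.exp (φ * Complex.I))
        (((t ^ (-(3 : ℝ) / 2) : ℝ) : ℂ) * ω) -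
      theta3Tail ((s : ℂ) * Complex.exp (φ * Complex.I))
        (((s ^ (-(3 : ℝ) / 2) : ℝ) : ℂ) * ω))‖ ≤
    Psi t - Psi s := by
  have hts : t < 1 := ht
  have ht0 : 0 < t := lt_of_lt_of_le hs hst
  have hs1 : s < 1 := lt_of_le_of_lt hst ht
  have hT := summable_term t ht0 ht φ ω hω
  have hS := summable_term s hs hs1 φ ω hω
  have hPt := summable_rpow t ht0 ht
  have hPs := summable_rpow s hs hs1
  rw [theta3Tail, theta3Tail, ← Summable.tsum_sub hT hS]
  calc ‖∑' j : ℕ, (((t : ℂ) * Complex.exp (φ * Complex.I)) ^ ((j + 4) * (j + 5) / 2) *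
          (((t ^ (-(3:ℝ)/2) : ℝ) : ℂ) * ω) ^ (j + 4) -
        ((s : ℂ) * Complex.exp (φ * Complex.I)) ^ ((j + 4) * (j + 5) / 2) *
          (((s ^ (-(3:ℝ)/2) : ℝ) : ℂ) * ω) ^ (j + 4))‖
      ≤ ∑' j : ℕ, ‖((t : ℂ) * Complex.exp (φ * Complex.I)) ^ ((j + 4) * (j + 5) / 2) *
          (((t ^ (-(3:ℝ)/2) : ℝ) : ℂ) * ω) ^ (j + 4) -
        ((s : ℂ) * Complex.exp (φ * Complex.I)) ^ ((j + 4) * (j + 5) / 2) *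
          (((s ^ (-(3:ℝ)/2) : ℝ) : ℂ) * ω) ^ (j + 4)‖ := by
        apply norm_tsum_le_tsum_norm
        exact (hT.sub hS).norm
    _ = ∑' j : ℕ, (t ^ eExp j - s ^ eExp j) := by
        congr 1; funext j
        rw [term_eq t ht0 φ ω j, term_eq s hs φ ω j, ← sub_mul, ← Complex.ofReal_sub,
          norm_mul, norm_mul, norm_pow, norm_pow, Complex.norm_real, Real.norm_eq_abs,
          Complex.norm_exp_ofReal_mul_I, hω,
          one_pow, one_pow, mul_one, mul_one]
        exact abs_of_nonneg (sub_nonneg.2 (Real.rpow_le_rpow hs.le hst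
          (by unfold eExp; positivity)))
    _ = Psi t - Psi s := by
        rw [Psi, Psi, Summable.tsum_sub hPt hPs]
        rfl
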